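/- Let θ be a steepest-flow trajectory and t0 ≥ 0 with 𝓛(θ(t0)) < 1; assume θ(t) ≠ 0 and ∇𝓛(θ(t)) ≠ 0 for all t ≥ t0, and that s ↦ N(θ(s)) and s ↦ log γ̃(θ(s)) are differentiable on (t0, ∞). Fix t > t0 with q(t) := min_{1≤i≤m} y_i f(θ(t), x_i) > 0, and set θ̃ := q(t)^{−1/L} · θ(t). Then there exist λ_1, …, λ_m ≥ 0 such that, for every vector k̃ ∈ ℝ^p which is a subgradient at θ̃ of the convex function θ ↦ ½N(θ)² (i.e., ½N(θ')² ≥ ½N(θ̃)² + ⟨k̃, θ' − θ̃⟩ for all θ' ∈ ℝ^p), the following two inequalities hold with h := Σ_{i=1}^m λ_i y_i ∇_θ f(θ̃, x_i): (1) ½N_*(h)² − ½N_*(k̃)² − ⟨θ̃, h − k̃⟩ ≤ γ̃(θ(t0))^{−2/L} · (1 − A(t)); (2) Σ_{i=1}^m λ_i (y_i f(θ̃, x_i) − 1) ≤ m / (e · γ̃(θ(t0))^{2/L} · L · log(1/𝓛(θ(t)))). -/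

import Mathlib

/-!
Take `λᵢ` proportional to `exp (-yᵢ f(θ(t), xᵢ))`. Since the gradients of the `L`-homogeneous `f`
scale by `c^(L-1)` under `θ ↦ c θ`, the vector `h = Σ λᵢ yᵢ ∇f(θ̃, xᵢ)` is then a positive multiple
of `-∇𝓛(θ(t))`, normalised so that `N_*(h) = N(θ̃)`. The first inequality reduces, through
`⟨θ̃, k̃⟩ ≤ ½ N_*(k̃)² + ½ N(θ̃)²`, to `N(θ̃)² (1 - A(t))`, and the second to `u e^(-u) ≤ 1/e`.
Both right-hand sides are controlled by `N(θ̃)^(-L) = γ(θ(t)) ≥ γ̃(θ(t)) ≥ γ̃(θ(t0))`. The soft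
margin increases along the flow: Euler's identity `⟨θ, ∇f(θ)⟩ = L f(θ)` gives
`L 𝓛 log (1/𝓛) ≤ N_*(∇𝓛) N(θ)`, while `log (1/𝓛)` grows at rate `N_*(∇𝓛)² / 𝓛` and `N(θ)` at rate
at most `N(θ') = N_*(∇𝓛)`.
-/

open Filter

noncomputable section

abbrev E (p : ℕ) : Type := EuclideanSpace ℝ (Fin p)

/-- `N` is a norm on `ℝ^p`. -/
def IsNormOn {p : ℕ} (N : E p → ℝ) : Prop :=
  (∀ θ, 0 ≤ N θ) ∧ (∀ θ, N θ = 0 ↔ θ = 0) ∧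
    (∀ (c : ℝ) (θ : E p), N (c • θ) = |c| * N θ) ∧
    ∀ θ θ' : E p, N (θ + θ') ≤ N θ + N θ'

/-- The dual norm `N_*(z) = sup {⟨z, v⟩ : N v ≤ 1}`. -/
def DualNorm {p : ℕ} (N : E p → ℝ) (z : E p) : ℝ :=
  sSup ((fun v => (inner ℝ z v : ℝ)) '' {v | N v ≤ 1})

/-- The exponential loss `𝓛(θ) = Σ_i exp (-(y_i f(θ, x_i)))`. -/
def ExpLoss {p d m : ℕ} (f : E p → E d → ℝ) (x : Fin m → E d) (y : Fin m → ℝ)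
    (θ : E p) : ℝ :=
  ∑ i, Real.exp (-(y i * f θ (x i)))

/-- A steepest-flow trajectory for the loss `𝓛` with respect to the norm `N`,
with derivative curve `θ'`. -/
def IsSteepestFlow {p : ℕ} (N : E p → ℝ) (𝓛 : E p → ℝ) (θ θ' : ℝ → E p) : Prop :=
  ∀ t, (0:ℝ) ≤ t → HasDerivAt θ (θ' t) t ∧
    (inner ℝ (θ' t) (gradient 𝓛 (θ t)) : ℝ) = -(DualNorm N (gradient 𝓛 (θ t))) ^ 2 ∧
    N (θ' t) = DualNorm N (gradient 𝓛 (θ t))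

/-- The soft margin `γ̃(θ) = -log 𝓛(θ) / N(θ)^L`. -/
def SoftMargin {p : ℕ} (N : E p → ℝ) (𝓛 : E p → ℝ) (L : ℝ) (θ : E p) : ℝ :=
  -Real.log (𝓛 θ) / N θ ^ L

/-- The hard margin `γ(θ) = (min_i y_i f(θ, x_i)) / N(θ)^L`. -/
def HardMargin {p d m : ℕ} (N : E p → ℝ) (f : E p → E d → ℝ) (x : Fin m → E d)
    (y : Fin m → ℝ) (L : ℝ) (θ : E p) : ℝ :=
  (⨅ i, y i * f θ (x i)) / N θ ^ L

/-- The alignment `A(t) = ⟨θ(t)/N(θ(t)), -∇𝓛(θ(t))/N_*(∇𝓛(θ(t)))⟩`. -/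
def FlowAlignment {p : ℕ} (N : E p → ℝ) (𝓛 : E p → ℝ) (θ : ℝ → E p) (t : ℝ) : ℝ :=
  inner ℝ ((N (θ t))⁻¹ • θ t) (-((DualNorm N (gradient 𝓛 (θ t)))⁻¹ • gradient 𝓛 (θ t)))

open Topology

theorem rpow_neg_one_div_rpow_mul_self {q L : ℝ} (hq : 0 < q) (hL : L ≠ 0) :
    (q ^ (-(1 / L))) ^ L * q = 1 := by
  rw [← Real.rpow_mul hq.le, neg_mul, one_div_mul_cancel hL, Real.rpow_neg_one,
    inv_mul_cancel₀ hq.ne']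

theorem rpow_two_div_mul_sq_le_one {γ a L : ℝ} (hγ : 0 ≤ γ) (ha : 0 ≤ a) (hL : 0 < L)
    (h : γ * a ^ L ≤ 1) : γ ^ (2 / L) * a ^ 2 ≤ 1 := by
  have hpow : (γ * a ^ L) ^ (2 / L) = γ ^ (2 / L) * a ^ 2 := by
    rw [Real.mul_rpow hγ (Real.rpow_nonneg ha L), ← Real.rpow_mul ha,
      mul_div_cancel₀ 2 hL.ne', Real.rpow_two]
  rw [← hpow]
  exact Real.rpow_le_one (mul_nonneg hγ (Real.rpow_nonneg ha L)) h (by positivity)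

theorem exp_neg_mul_div_sub_one_le {q : ℝ} (hq : 0 < q) (z : ℝ) :
    Real.exp (-z) * (z / q - 1) ≤ Real.exp (-q) / (Real.exp 1 * q) := by
  calc Real.exp (-z) * (z / q - 1) = Real.exp (-q) * ((z - q) * Real.exp (-(z - q))) / q := by
        rw [mul_comm (z - q), ← mul_assoc, ← Real.exp_add]
        field_simp
        ring_nf
    _ ≤ Real.exp (-q) * Real.exp (-1) / q := by gcongr; exact Real.mul_exp_neg_le_exp_neg_one _
    _ = Real.exp (-q) / (Real.exp 1 * q) := by rw [Real.exp_neg 1]; field_simp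

theorem mul_div_le_sq_div_div {L n n' D l ℓ : ℝ} (hL : 0 ≤ L) (hn : 0 < n) (hl : 0 < l)
    (hℓ : 0 < ℓ) (hD : 0 ≤ D) (hn' : n' ≤ D) (hkey : L * ℓ * l ≤ D * n) :
    L * (n' / n) ≤ D ^ 2 / l / ℓ :=
  calc L * (n' / n) ≤ L * (D / n) := by gcongr
    _ ≤ D ^ 2 / l / ℓ := by
      rw [div_div, mul_div_assoc', div_le_div_iff₀ hn (by positivity)]
      nlinarith [mul_le_mul_of_nonneg_left hkey hD]

namespace IsNormOn

variable {p : ℕ} {N : E p → ℝ}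

theorem nonneg (hN : IsNormOn N) (v : E p) : 0 ≤ N v := hN.1 v

theorem smul (hN : IsNormOn N) (c : ℝ) (v : E p) : N (c • v) = |c| * N v := hN.2.2.1 c v

theorem add_le (hN : IsNormOn N) (v w : E p) : N (v + w) ≤ N v + N w := hN.2.2.2 v w

theorem pos (hN : IsNormOn N) {v : E p} (hv : v ≠ 0) : 0 < N v :=
  (hN.nonneg v).lt_of_ne' (mt (hN.2.1 v).mp hv)

theorem map_zero (hN : IsNormOn N) : N 0 = 0 := (hN.2.1 0).mpr rfl

theorem sub_le_map_sub (hN : IsNormOn N) (v w : E p) : N v - N w ≤ N (v - w) := by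
  simpa using hN.add_le (v - w) w

theorem inv_smul_self_le_one (hN : IsNormOn N) (v : E p) : N ((N v)⁻¹ • v) ≤ 1 := by
  rw [hN.smul, abs_inv, abs_of_nonneg (hN.nonneg v)]
  exact inv_mul_le_one

theorem convexOn (hN : IsNormOn N) : ConvexOn ℝ Set.univ N := by
  refine ⟨convex_univ, fun v _ w _ a b ha hb _ => ?_⟩
  calc N (a • v + b • w) ≤ N (a • v) + N (b • w) := hN.add_le _ _
    _ = a • N v + b • N w := by
      rw [hN.smul, hN.smul, abs_of_nonneg ha, abs_of_nonneg hb, smul_eq_mul, smul_eq_mul]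

theorem continuous (hN : IsNormOn N) : Continuous N :=
  continuousOn_univ.mp (hN.convexOn.continuousOn isOpen_univ)

theorem isBounded_setOf_le_one (hN : IsNormOn N) : Bornology.IsBounded {v : E p | N v ≤ 1} := by
  have hpos : ∀ u ∈ Metric.sphere (0 : E p) 1, N u ≠ 0 := fun u hu =>
    (hN.pos (ne_zero_of_mem_unit_sphere ⟨u, hu⟩)).ne'
  obtain ⟨C, hC⟩ := (isCompact_sphere (0 : E p) 1).exists_bound_of_continuousOn
    (hN.continuous.continuousOn.inv₀ hpos)
  refine (Metric.isBounded_iff_subset_closedBall 0).mpr ⟨|C|, fun v hv => ?_⟩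
  rw [Set.mem_ofPred_eq] at hv
  rw [mem_closedBall_zero_iff]
  rcases eq_or_ne v 0 with rfl | hv0
  · simp
  have hnv : 0 < ‖v‖ := norm_pos_iff.mpr hv0
  have hNv : 0 < N v := hN.pos hv0
  have hu : ‖v‖⁻¹ • v ∈ Metric.sphere (0 : E p) 1 := by
    simp [norm_smul, hnv.ne']
  have hbound := hC _ hu
  simp only [Pi.inv_apply] at hbound
  rw [hN.smul, abs_of_pos (inv_pos.mpr hnv), norm_inv, Real.norm_of_nonneg (by positivity),
    mul_inv, inv_inv] at hbound
  calc ‖v‖ = ‖v‖ * (N v)⁻¹ * N v := by field_simp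
    _ ≤ |C| * 1 := mul_le_mul (hbound.trans (le_abs_self C)) hv hNv.le (abs_nonneg C)
    _ = |C| := mul_one _

theorem bddAbove_inner (hN : IsNormOn N) (z : E p) :
    BddAbove ((fun v => (inner ℝ z v : ℝ)) '' {v | N v ≤ 1}) :=
  ((innerSL ℝ z).lipschitz.isBounded_image hN.isBounded_setOf_le_one).bddAbove

theorem inner_le_dualNorm (hN : IsNormOn N) {z v : E p} (hv : N v ≤ 1) :
    (inner ℝ z v : ℝ) ≤ DualNorm N z :=
  le_csSup (hN.bddAbove_inner z) ⟨v, hv, rfl⟩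

theorem dualNorm_le (hN : IsNormOn N) {z : E p} {B : ℝ}
    (h : ∀ v, N v ≤ 1 → (inner ℝ z v : ℝ) ≤ B) : DualNorm N z ≤ B :=
  csSup_le ⟨0, 0, by simp [hN.map_zero]⟩ (fun _ ⟨v, hv, hr⟩ => hr ▸ h v hv)

theorem dualNorm_nonneg (hN : IsNormOn N) (z : E p) : 0 ≤ DualNorm N z := by
  simpa using hN.inner_le_dualNorm (z := z) (v := 0) (by simp [hN.map_zero])

theorem inner_le_dualNorm_mul (hN : IsNormOn N) (z v : E p) :
    (inner ℝ z v : ℝ) ≤ DualNorm N z * N v := by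
  rcases eq_or_ne v 0 with rfl | hv
  · simp [hN.map_zero]
  have hNv := hN.pos hv
  have h := hN.inner_le_dualNorm (z := z) (hN.inv_smul_self_le_one v)
  rw [real_inner_smul_right, inv_mul_le_iff₀ hNv] at h
  linarith

theorem dualNorm_smul_le (hN : IsNormOn N) (c : ℝ) (z : E p) :
    DualNorm N (c • z) ≤ |c| * DualNorm N z :=
  hN.dualNorm_le fun v hv => by
    rw [real_inner_smul_left, ← real_inner_smul_right]
    calc (inner ℝ z (c • v) : ℝ) ≤ DualNorm N z * N (c • v) := hN.inner_le_dualNorm_mul _ _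
      _ = |c| * DualNorm N z * N v := by rw [hN.smul]; ring
      _ ≤ |c| * DualNorm N z * 1 := by
        gcongr
        exact mul_nonneg (abs_nonneg c) (hN.dualNorm_nonneg z)
      _ = |c| * DualNorm N z := mul_one _

theorem dualNorm_smul (hN : IsNormOn N) (c : ℝ) (z : E p) :
    DualNorm N (c • z) = |c| * DualNorm N z := by
  rcases eq_or_ne c 0 with rfl | hc
  · simpa using le_antisymm (by simpa using hN.dualNorm_smul_le 0 z) (hN.dualNorm_nonneg 0)
  refine (hN.dualNorm_smul_le c z).antisymm ?_
  have h := hN.dualNorm_smul_le c⁻¹ (c • z)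
  rw [inv_smul_smul₀ hc, abs_inv] at h
  rwa [le_inv_mul_iff₀ (abs_pos.mpr hc)] at h

theorem dualNorm_neg (hN : IsNormOn N) (z : E p) : DualNorm N (-z) = DualNorm N z := by
  simpa using hN.dualNorm_smul (-1) z

theorem dualNorm_pos (hN : IsNormOn N) {z : E p} (hz : z ≠ 0) : 0 < DualNorm N z := by
  have h := hN.inner_le_dualNorm (z := z) (hN.inv_smul_self_le_one z)
  rw [real_inner_smul_right, real_inner_self_eq_norm_sq] at h
  have := hN.pos hz
  have := norm_pos_iff.mpr hz
  exact h.trans_lt' (by positivity)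

theorem half_sq_dualNorm_sub_le (hN : IsNormOn N) {w h : E p} (hh : DualNorm N h = N w)
    (k : E p) :
    1 / 2 * DualNorm N h ^ 2 - 1 / 2 * DualNorm N k ^ 2 - (inner ℝ w (h - k) : ℝ) ≤
      N w ^ 2 - (inner ℝ w h : ℝ) := by
  have hk : (inner ℝ w k : ℝ) ≤ DualNorm N k * N w := by
    rw [real_inner_comm]; exact hN.inner_le_dualNorm_mul k w
  rw [inner_sub_right, hh]
  nlinarith [sq_nonneg (DualNorm N k - N w)]

theorem flowAlignment_le_one (hN : IsNormOn N) (𝓛 : E p → ℝ) (θ : ℝ → E p) (t : ℝ) :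
    FlowAlignment N 𝓛 θ t ≤ 1 := by
  set g := gradient 𝓛 (θ t)
  have hg : DualNorm N (-((DualNorm N g)⁻¹ • g)) ≤ 1 := by
    rw [hN.dualNorm_neg, hN.dualNorm_smul, abs_inv, abs_of_nonneg (hN.dualNorm_nonneg g)]
    exact inv_mul_le_one
  calc FlowAlignment N 𝓛 θ t
      = (inner ℝ (-((DualNorm N g)⁻¹ • g)) ((N (θ t))⁻¹ • θ t) : ℝ) := real_inner_comm _ _
    _ ≤ DualNorm N (-((DualNorm N g)⁻¹ • g)) * N ((N (θ t))⁻¹ • θ t) :=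
      hN.inner_le_dualNorm_mul _ _
    _ ≤ 1 * 1 := mul_le_mul hg (hN.inv_smul_self_le_one _) (hN.nonneg _) zero_le_one
    _ = 1 := mul_one 1

theorem le_of_hasDerivAt_comp (hN : IsNormOn N) {φ : ℝ → E p} {v : E p} {n' s : ℝ}
    (hφ : HasDerivAt φ v s) (hNφ : HasDerivAt (fun u => N (φ u)) n' s) : n' ≤ N v := by
  have hslope : Tendsto (slope (fun u => N (φ u)) s) (𝓝[>] s) (𝓝 n') :=
    (hasDerivAt_iff_tendsto_slope.mp hNφ).mono_left (nhdsGT_le_nhdsNE s)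
  have hNslope : Tendsto (fun u => N (slope φ s u)) (𝓝[>] s) (𝓝 (N v)) :=
    ((hN.continuous.tendsto v).comp (hasDerivAt_iff_tendsto_slope.mp hφ)).mono_left
      (nhdsGT_le_nhdsNE s)
  refine le_of_tendsto_of_tendsto hslope hNslope ?_
  filter_upwards [self_mem_nhdsWithin] with u (hu : s < u)
  have hinv : 0 < (u - s)⁻¹ := inv_pos.mpr (sub_pos.mpr hu)
  rw [slope_def_module, slope_def_module, hN.smul, abs_of_pos hinv, smul_eq_mul]
  exact mul_le_mul_of_nonneg_left (hN.sub_le_map_sub _ _) hinv.le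

theorem dualGap_le_flowAlignment (hN : IsNormOn N) (𝓛 : E p → ℝ) (θ : ℝ → E p) (t : ℝ)
    (hθ : θ t ≠ 0) (hg : gradient 𝓛 (θ t) ≠ 0) {c : ℝ} (hc : 0 < c) (k : E p) :
    1 / 2 * DualNorm N ((c * N (θ t) / DualNorm N (gradient 𝓛 (θ t))) • -gradient 𝓛 (θ t)) ^ 2 -
        1 / 2 * DualNorm N k ^ 2 -
        (inner ℝ (c • θ t)
          ((c * N (θ t) / DualNorm N (gradient 𝓛 (θ t))) • -gradient 𝓛 (θ t) - k) : ℝ) ≤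
      (c * N (θ t)) ^ 2 * (1 - FlowAlignment N 𝓛 θ t) := by
  have hn := hN.pos hθ
  have hD := hN.dualNorm_pos hg
  have hNc : N (c • θ t) = c * N (θ t) := by rw [hN.smul, abs_of_pos hc]
  have hh : DualNorm N ((c * N (θ t) / DualNorm N (gradient 𝓛 (θ t))) • -gradient 𝓛 (θ t)) =
      N (c • θ t) := by
    rw [hN.dualNorm_smul, hN.dualNorm_neg, abs_of_pos (by positivity), hNc]
    field_simp
  refine (hN.half_sq_dualNorm_sub_le hh k).trans_eq ?_
  rw [hNc, FlowAlignment, real_inner_smul_left, real_inner_smul_right, inner_neg_right,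
    real_inner_smul_left, inner_neg_right, real_inner_smul_right]
  field_simp

end IsNormOn

section Homogeneous

variable {V : Type*} [NormedAddCommGroup V] [InnerProductSpace ℝ V] [CompleteSpace V]
  {F : V → ℝ} {L : ℝ}

theorem inner_gradient_of_homogeneous
    (hhom : ∀ c : ℝ, 0 < c → ∀ w : V, F (c • w) = c ^ L * F w) {w : V}
    (hF : DifferentiableAt ℝ F w) :
    (inner ℝ w (gradient F w) : ℝ) = L * F w := by
  have hray : HasDerivAt (fun c : ℝ => F (c • w)) (inner ℝ (gradient F w) w : ℝ) 1 := by
    have hline : HasDerivAt (fun c : ℝ => c • w) w 1 := by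
      simpa using (hasDerivAt_id (1 : ℝ)).smul_const w
    have hF' : HasFDerivAt F (fderiv ℝ F w) ((1 : ℝ) • w) := by
      rw [one_smul]; exact hF.hasFDerivAt
    have h := hF'.comp_hasDerivAt (1 : ℝ) hline
    rw [hF.hasGradientAt.fderiv_apply] at h
    exact h
  have hpow : HasDerivAt (fun c : ℝ => F (c • w)) (L * F w) 1 := by
    have h := (Real.hasDerivAt_rpow_const (x := 1) (p := L) (Or.inl one_ne_zero)).mul_const (F w)
    rw [Real.one_rpow, mul_one] at h
    refine h.congr_of_eventuallyEq ?_
    filter_upwards [Ioi_mem_nhds one_pos] with c hc using hhom c hc w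
  rw [real_inner_comm]
  exact hray.unique hpow

theorem gradient_smul_of_homogeneous
    (hhom : ∀ c : ℝ, 0 < c → ∀ w : V, F (c • w) = c ^ L * F w) (hF : Differentiable ℝ F)
    {c : ℝ} (hc : 0 < c) (w : V) :
    gradient F (c • w) = c ^ (L - 1) • gradient F w := by
  have hchain : HasFDerivAt (fun u => F (c • u)) ((fderiv ℝ F (c • w)).comp (c • .id ℝ V)) w :=
    (hF (c • w)).hasFDerivAt.comp w ((hasFDerivAt_id w).const_smul c)
  have hscale : HasFDerivAt (fun u => F (c • u)) (c ^ L • fderiv ℝ F w) w := by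
    have h := (hF w).hasFDerivAt.const_smul (c ^ L)
    refine h.congr_of_eventuallyEq (Eventually.of_forall fun u => ?_)
    simp [hhom c hc u]
  have hc' : c ^ L = c * c ^ (L - 1) := by
    rw [Real.rpow_sub hc, Real.rpow_one]; field_simp
  refine ext_inner_right ℝ fun v => ?_
  have h := congrArg (fun T => T v) (hchain.unique hscale)
  simp only [ContinuousLinearMap.comp_apply, _root_.smul_apply,
    ContinuousLinearMap.id_apply, smul_eq_mul] at h
  rw [(hF _).hasGradientAt.fderiv_apply, (hF w).hasGradientAt.fderiv_apply,
    real_inner_smul_right, hc', mul_assoc] at h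
  rw [real_inner_smul_left]
  exact mul_left_cancel₀ hc.ne' h

end Homogeneous

section ExpLoss

variable {p d m : ℕ} {f : E p → E d → ℝ} {x : Fin m → E d} {y : Fin m → ℝ} {L : ℝ}

theorem hasGradientAt_expLoss (hf : ∀ x' : E d, Differentiable ℝ fun θ => f θ x') (w : E p) :
    HasGradientAt (ExpLoss f x y)
      (-∑ i, (y i * Real.exp (-(y i * f w (x i)))) • gradient (fun θ => f θ (x i)) w) w := by
  have hterm : ∀ i ∈ Finset.univ, HasFDerivAt (fun θ => Real.exp (-(y i * f θ (x i))))
      (Real.exp (-(y i * f w (x i))) • -(y i • fderiv ℝ (fun θ => f θ (x i)) w)) w :=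
    fun i _ => (((hf (x i)) w).hasFDerivAt.const_smul (y i)).neg.exp
  rw [hasGradientAt_iff_hasFDerivAt]
  have hsum := HasFDerivAt.sum hterm
  have hfun : ExpLoss f x y = ∑ i, fun θ => Real.exp (-(y i * f θ (x i))) := by
    funext θ; simp [ExpLoss]
  rw [hfun]
  refine hsum.congr_fderiv ?_
  ext v
  simp only [_root_.sum_apply, _root_.smul_apply, _root_.neg_apply,
    InnerProductSpace.toDual_apply_apply, inner_neg_left, sum_inner, real_inner_smul_left,
    ((hf _) w).hasGradientAt.fderiv_apply, smul_eq_mul]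
  rw [← Finset.sum_neg_distrib]
  exact Finset.sum_congr rfl fun i _ => by ring

theorem expLoss_pos (hm : 0 < m) (w : E p) : 0 < ExpLoss f x y w :=
  have : Nonempty (Fin m) := ⟨⟨0, hm⟩⟩
  Finset.sum_pos (fun _ _ => Real.exp_pos _) Finset.univ_nonempty

theorem exp_neg_le_expLoss (i : Fin m) (w : E p) :
    Real.exp (-(y i * f w (x i))) ≤ ExpLoss f x y w :=
  Finset.single_le_sum (f := fun j => Real.exp (-(y j * f w (x j))))
    (fun _ _ => (Real.exp_pos _).le) (Finset.mem_univ i)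

theorem neg_log_expLoss_le (i : Fin m) (w : E p) :
    -Real.log (ExpLoss f x y w) ≤ y i * f w (x i) := by
  have h := Real.log_le_log (Real.exp_pos _) (exp_neg_le_expLoss (f := f) (x := x) (y := y) i w)
  rw [Real.log_exp] at h
  linarith

theorem exp_neg_iInf_le_expLoss (hm : 0 < m) (w : E p) :
    Real.exp (-⨅ i, y i * f w (x i)) ≤ ExpLoss f x y w := by
  have : Nonempty (Fin m) := ⟨⟨0, hm⟩⟩
  obtain ⟨i, hi⟩ := exists_eq_ciInf_of_finite (f := fun i => y i * f w (x i))
  rw [← hi]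
  exact exp_neg_le_expLoss i w

theorem softMargin_le_hardMargin {N : E p → ℝ} (hN : IsNormOn N) (hm : 0 < m) (w : E p) :
    SoftMargin N (ExpLoss f x y) L w ≤ HardMargin N f x y L w := by
  have : Nonempty (Fin m) := ⟨⟨0, hm⟩⟩
  exact div_le_div_of_nonneg_right (le_ciInf fun i => neg_log_expLoss_le i w)
    (Real.rpow_nonneg (hN.nonneg w) L)

theorem inner_neg_gradient_expLoss (hf : ∀ x' : E d, Differentiable ℝ fun θ => f θ x')
    (hhom : ∀ c : ℝ, 0 < c → ∀ (θ : E p) (x' : E d), f (c • θ) x' = c ^ L * f θ x')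
    (w : E p) :
    (inner ℝ w (-gradient (ExpLoss f x y) w) : ℝ) =
      L * ∑ i, Real.exp (-(y i * f w (x i))) * (y i * f w (x i)) := by
  rw [(hasGradientAt_expLoss hf w).gradient, neg_neg, inner_sum, Finset.mul_sum]
  refine Finset.sum_congr rfl fun i _ => ?_
  rw [real_inner_smul_right, inner_gradient_of_homogeneous (fun c hc θ => hhom c hc θ (x i))
    (hf (x i) w)]
  ring

theorem mul_neg_log_expLoss_mul_le {N : E p → ℝ} (hN : IsNormOn N) (hL : 0 ≤ L)
    (hf : ∀ x' : E d, Differentiable ℝ fun θ => f θ x')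
    (hhom : ∀ c : ℝ, 0 < c → ∀ (θ : E p) (x' : E d), f (c • θ) x' = c ^ L * f θ x')
    (w : E p) :
    L * -Real.log (ExpLoss f x y w) * ExpLoss f x y w ≤
      DualNorm N (gradient (ExpLoss f x y) w) * N w := by
  have hmargin : -Real.log (ExpLoss f x y w) * ExpLoss f x y w ≤
      ∑ i, Real.exp (-(y i * f w (x i))) * (y i * f w (x i)) := by
    rw [ExpLoss, Finset.mul_sum]
    exact Finset.sum_le_sum fun i _ =>
      by rw [mul_comm]; exact mul_le_mul_of_nonneg_left (neg_log_expLoss_le i w) (Real.exp_pos _).le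
  calc L * -Real.log (ExpLoss f x y w) * ExpLoss f x y w
      ≤ L * ∑ i, Real.exp (-(y i * f w (x i))) * (y i * f w (x i)) := by
        rw [mul_assoc]; exact mul_le_mul_of_nonneg_left hmargin hL
    _ = inner ℝ (-gradient (ExpLoss f x y) w) w := by
        rw [real_inner_comm, inner_neg_gradient_expLoss hf hhom]
    _ ≤ DualNorm N (-gradient (ExpLoss f x y) w) * N w := hN.inner_le_dualNorm_mul _ _
    _ = DualNorm N (gradient (ExpLoss f x y) w) * N w := by rw [hN.dualNorm_neg]

theorem sum_smul_gradient_smul_eq (hf : ∀ x' : E d, Differentiable ℝ fun θ => f θ x')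
    (hhom : ∀ c : ℝ, 0 < c → ∀ (θ : E p) (x' : E d), f (c • θ) x' = c ^ L * f θ x')
    (β : ℝ) {c : ℝ} (hc : 0 < c) (w : E p) :
    ∑ i, (β * Real.exp (-(y i * f w (x i)))) • (y i • gradient (fun θ => f θ (x i)) (c • w)) =
      (β * c ^ (L - 1)) • -gradient (ExpLoss f x y) w := by
  rw [(hasGradientAt_expLoss hf w).gradient, neg_neg, Finset.smul_sum]
  refine Finset.sum_congr rfl fun i _ => ?_
  rw [gradient_smul_of_homogeneous (fun c hc θ => hhom c hc θ (x i)) (hf (x i)) hc, smul_smul,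
    smul_smul, smul_smul]
  congr 1
  ring

end ExpLoss

section SoftMargin

variable {p : ℕ} {N : E p → ℝ} {𝓛 : E p → ℝ} {L : ℝ} {w : E p}

theorem softMargin_pos (hN : IsNormOn N) (hw : w ≠ 0) (h0 : 0 < 𝓛 w) (h1 : 𝓛 w < 1) :
    0 < SoftMargin N 𝓛 L w :=
  div_pos (neg_pos.mpr (Real.log_neg h0 h1)) (Real.rpow_pos_of_pos (hN.pos hw) L)

theorem log_softMargin (hN : IsNormOn N) (hw : w ≠ 0) (h0 : 0 < 𝓛 w) (h1 : 𝓛 w < 1) :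
    Real.log (SoftMargin N 𝓛 L w) = Real.log (-Real.log (𝓛 w)) - L * Real.log (N w) := by
  rw [SoftMargin, Real.log_div (neg_pos.mpr (Real.log_neg h0 h1)).ne'
    (Real.rpow_pos_of_pos (hN.pos hw) L).ne', Real.log_rpow (hN.pos hw)]

end SoftMargin

namespace IsSteepestFlow

variable {p : ℕ} {N : E p → ℝ} {𝓛 : E p → ℝ} {θ θ' : ℝ → E p}

theorem hasDerivAt_loss (hflow : IsSteepestFlow N 𝓛 θ θ') {s : ℝ} (hs : 0 ≤ s)
    (h𝓛 : DifferentiableAt ℝ 𝓛 (θ s)) :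
    HasDerivAt (fun u => 𝓛 (θ u)) (-DualNorm N (gradient 𝓛 (θ s)) ^ 2) s := by
  have h := h𝓛.hasGradientAt.hasFDerivAt.comp_hasDerivAt s (hflow s hs).1
  rwa [InnerProductSpace.toDual_apply_apply, real_inner_comm, (hflow s hs).2.1] at h

theorem hasDerivAt_neg_log_loss (hflow : IsSteepestFlow N 𝓛 θ θ') {s : ℝ} (hs : 0 ≤ s)
    (h𝓛 : DifferentiableAt ℝ 𝓛 (θ s)) (hpos : 0 < 𝓛 (θ s)) :
    HasDerivAt (fun u => -Real.log (𝓛 (θ u)))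
      (DualNorm N (gradient 𝓛 (θ s)) ^ 2 / 𝓛 (θ s)) s := by
  have h := ((hflow.hasDerivAt_loss hs h𝓛).log hpos.ne').neg
  rwa [neg_div, neg_neg] at h

theorem deriv_norm_le (hN : IsNormOn N) (hflow : IsSteepestFlow N 𝓛 θ θ') {s : ℝ} (hs : 0 ≤ s)
    (hdiff : DifferentiableAt ℝ (fun u => N (θ u)) s) :
    deriv (fun u => N (θ u)) s ≤ DualNorm N (gradient 𝓛 (θ s)) :=
  (hflow s hs).2.2 ▸ hN.le_of_hasDerivAt_comp (hflow s hs).1 hdiff.hasDerivAt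

theorem antitoneOn_loss (hflow : IsSteepestFlow N 𝓛 θ θ') (h𝓛 : Differentiable ℝ 𝓛) :
    AntitoneOn (fun u => 𝓛 (θ u)) (Set.Ici 0) := by
  refine antitoneOn_of_hasDerivWithinAt_nonpos (f' := fun s => -DualNorm N (gradient 𝓛 (θ s)) ^ 2)
    (convex_Ici 0)
    (fun s hs => (hflow.hasDerivAt_loss hs (h𝓛 _)).continuousAt.continuousWithinAt)
    (fun s hs => ?_) (fun s _ => neg_nonpos.mpr (sq_nonneg _))
  rw [interior_Ici] at hs
  exact (hflow.hasDerivAt_loss (hs.le) (h𝓛 _)).hasDerivWithinAt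

theorem softMargin_le (hN : IsNormOn N) (hflow : IsSteepestFlow N 𝓛 θ θ')
    (h𝓛 : Differentiable ℝ 𝓛) (h𝓛pos : ∀ w, 0 < 𝓛 w) {L : ℝ} (hL : 0 ≤ L)
    (hkey : ∀ w, L * -Real.log (𝓛 w) * 𝓛 w ≤ DualNorm N (gradient 𝓛 w) * N w)
    {t0 t : ℝ} (ht0 : 0 ≤ t0) (hsep : 𝓛 (θ t0) < 1) (hθ : ∀ s, t0 ≤ s → θ s ≠ 0)
    (hNdiff : ∀ s ∈ Set.Ioi t0, DifferentiableAt ℝ (fun u => N (θ u)) s) (ht : t0 ≤ t) :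
    SoftMargin N 𝓛 L (θ t0) ≤ SoftMargin N 𝓛 L (θ t) := by
  set D : ℝ → ℝ := fun s => DualNorm N (gradient 𝓛 (θ s))
  set ℓ : ℝ → ℝ := fun s => -Real.log (𝓛 (θ s))
  set n : ℝ → ℝ := fun s => N (θ s)
  have hlt : ∀ s, t0 ≤ s → 𝓛 (θ s) < 1 := fun s hs =>
    (hflow.antitoneOn_loss h𝓛 ht0 (ht0.trans hs) hs).trans_lt hsep
  have hℓpos : ∀ s, t0 ≤ s → 0 < ℓ s := fun s hs =>
    neg_pos.mpr (Real.log_neg (h𝓛pos _) (hlt s hs))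
  have hnpos : ∀ s, t0 ≤ s → 0 < n s := fun s hs => hN.pos (hθ s hs)
  have hℓ' : ∀ s, t0 ≤ s → HasDerivAt ℓ (D s ^ 2 / 𝓛 (θ s)) s := fun s hs =>
    hflow.hasDerivAt_neg_log_loss (ht0.trans hs) (h𝓛 _) (h𝓛pos _)
  set φ : ℝ → ℝ := fun s => Real.log (ℓ s) - L * Real.log (n s)
  set φ' : ℝ → ℝ := fun s => D s ^ 2 / 𝓛 (θ s) / ℓ s - L * (deriv n s / n s)
  have hφ' : ∀ s ∈ Set.Ioi t0, HasDerivAt φ (φ' s) s := fun s hs =>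
    ((hℓ' s (hs.le)).log (hℓpos s (hs.le)).ne').sub
      (((hNdiff s hs).hasDerivAt.log (hnpos s (hs.le)).ne').const_mul L)
  have hφ'_nonneg : ∀ s ∈ Set.Ioi t0, 0 ≤ φ' s := fun s hs =>
    sub_nonneg.mpr (mul_div_le_sq_div_div hL (hnpos s hs.le) (h𝓛pos _) (hℓpos s hs.le)
      (hN.dualNorm_nonneg _) (hflow.deriv_norm_le hN (ht0.trans hs.le) (hNdiff s hs)) (hkey _))
  have hφ_cont : ContinuousOn φ (Set.Icc t0 t) := fun s hs =>
    ((((hℓ' s hs.1).continuousAt.log (hℓpos s hs.1).ne').sub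
      ((hN.continuous.continuousAt.comp (hflow s (ht0.trans hs.1)).1.continuousAt).log
        (hnpos s hs.1).ne' |>.const_mul L))).continuousWithinAt
  have hmono : MonotoneOn φ (Set.Icc t0 t) := by
    refine monotoneOn_of_hasDerivWithinAt_nonneg (f' := φ') (convex_Icc t0 t) hφ_cont
      (fun s hs => ?_) (fun s hs => ?_)
    all_goals rw [interior_Icc] at hs
    · exact (hφ' s hs.1).hasDerivWithinAt
    · exact hφ'_nonneg s hs.1
  have hpos : ∀ s, t0 ≤ s → 0 < SoftMargin N 𝓛 L (θ s) := fun s hs =>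
    softMargin_pos hN (hθ s hs) (h𝓛pos _) (hlt s hs)
  rw [← Real.log_le_log_iff (hpos t0 le_rfl) (hpos t ht),
    log_softMargin hN (hθ t0 le_rfl) (h𝓛pos _) hsep,
    log_softMargin hN (hθ t ht) (h𝓛pos _) (hlt t ht)]
  exact hmono (Set.left_mem_Icc.mpr ht) (Set.right_mem_Icc.mpr ht) ht

end IsSteepestFlow

section ApproxKKT

variable {p d m : ℕ} {f : E p → E d → ℝ} {x : Fin m → E d} {y : Fin m → ℝ} {L : ℝ}

theorem sum_mul_margin_sub_one_le
    (hhom : ∀ c : ℝ, 0 < c → ∀ (θ : E p) (x' : E d), f (c • θ) x' = c ^ L * f θ x')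
    {c q β : ℝ} (hc : 0 < c) (hq : 0 < q) (hcq : c ^ L * q = 1) (hβ : 0 ≤ β) (w : E p) :
    ∑ i, β * Real.exp (-(y i * f w (x i))) * (y i * f (c • w) (x i) - 1) ≤
      m * (β * (Real.exp (-q) / (Real.exp 1 * q))) := by
  have hcL : c ^ L = q⁻¹ := eq_inv_of_mul_eq_one_left hcq
  calc ∑ i, β * Real.exp (-(y i * f w (x i))) * (y i * f (c • w) (x i) - 1)
      = ∑ i, β * (Real.exp (-(y i * f w (x i))) * (y i * f w (x i) / q - 1)) := by
        refine Finset.sum_congr rfl fun i _ => ?_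
        rw [hhom c hc, hcL]
        ring
    _ ≤ ∑ _i : Fin m, β * (Real.exp (-q) / (Real.exp 1 * q)) :=
        Finset.sum_le_sum fun i _ => mul_le_mul_of_nonneg_left (exp_neg_mul_div_sub_one_le hq _) hβ
    _ = m * (β * (Real.exp (-q) / (Real.exp 1 * q))) := by simp

theorem rpow_two_div_mul_sq_le_one_of_le_hardMargin {N : E p → ℝ} (hN : IsNormOn N) (hL : 0 < L)
    {w : E p} (hw : w ≠ 0) (hq : 0 < ⨅ i, y i * f w (x i)) {γ : ℝ} (hγ : 0 ≤ γ)
    (hγle : γ ≤ HardMargin N f x y L w) :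
    γ ^ (2 / L) * ((⨅ i, y i * f w (x i)) ^ (-(1 / L)) * N w) ^ 2 ≤ 1 := by
  set q := ⨅ i, y i * f w (x i)
  have hn := hN.pos hw
  have hc : 0 < q ^ (-(1 / L)) := Real.rpow_pos_of_pos hq _
  refine rpow_two_div_mul_sq_le_one hγ (by positivity) hL ?_
  rw [HardMargin, le_div_iff₀ (Real.rpow_pos_of_pos hn L)] at hγle
  calc γ * (q ^ (-(1 / L)) * N w) ^ L = γ * N w ^ L * (q ^ (-(1 / L))) ^ L := by
        rw [Real.mul_rpow hc.le hn.le]; ring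
    _ ≤ q * (q ^ (-(1 / L))) ^ L := by gcongr
    _ = 1 := by rw [mul_comm, rpow_neg_one_div_rpow_mul_self hq hL.ne']

theorem exists_approx_kkt_multipliers {N : E p → ℝ} (hN : IsNormOn N) (hm : 0 < m) (hL : 0 < L)
    (hf : ∀ x' : E d, Differentiable ℝ fun θ => f θ x')
    (hhom : ∀ c : ℝ, 0 < c → ∀ (θ : E p) (x' : E d), f (c • θ) x' = c ^ L * f θ x')
    (θ : ℝ → E p) (t : ℝ) (hθ : θ t ≠ 0) (hg : gradient (ExpLoss f x y) (θ t) ≠ 0)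
    (hloss : ExpLoss f x y (θ t) < 1) {q : ℝ} (hq_def : q = ⨅ i, y i * f (θ t) (x i))
    (hq : 0 < q) {γ : ℝ} (hγ : 0 < γ) (hγle : γ ≤ HardMargin N f x y L (θ t)) :
    ∃ lam : Fin m → ℝ, (∀ i, 0 ≤ lam i) ∧ ∀ ktilde : E p,
      ((1/2) * (DualNorm N
          (∑ i, lam i • (y i • gradient (fun w => f w (x i)) (q ^ (-(1 / L)) • θ t)))) ^ 2 -
        (1/2) * (DualNorm N ktilde) ^ 2 -
        (inner ℝ (q ^ (-(1 / L)) • θ t)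
          ((∑ i, lam i • (y i • gradient (fun w => f w (x i)) (q ^ (-(1 / L)) • θ t))) -
            ktilde) : ℝ) ≤
        γ ^ (-(2:ℝ) / L) * (1 - FlowAlignment N (ExpLoss f x y) θ t)) ∧
      (∑ i, lam i * (y i * f (q ^ (-(1 / L)) • θ t) (x i) - 1) ≤
        (m : ℝ) / (Real.exp 1 * γ ^ ((2:ℝ) / L) * L * Real.log (1 / ExpLoss f x y (θ t)))) := by
  set c := q ^ (-(1 / L))
  set n := N (θ t)
  set D := DualNorm N (gradient (ExpLoss f x y) (θ t))
  have hn : 0 < n := hN.pos hθ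
  have hD : 0 < D := hN.dualNorm_pos hg
  have hc : 0 < c := Real.rpow_pos_of_pos hq _
  have hcq : c ^ L * q = 1 := rpow_neg_one_div_rpow_mul_self hq hL.ne'
  have hsq : γ ^ (2 / L) * (c * n) ^ 2 ≤ 1 := by
    subst hq_def
    exact rpow_two_div_mul_sq_le_one_of_le_hardMargin hN hL hθ hq hγ.le hγle
  -- with this `β`, `h = Σ λᵢ yᵢ ∇f(θ̃, xᵢ)` is `(c n / D) • -∇𝓛(θ t)`, so `N_*(h) = N(θ̃)`
  set β := c ^ 2 * q * n / D
  refine ⟨fun i => β * Real.exp (-(y i * f (θ t) (x i))), fun i => by positivity, fun k => ⟨?_, ?_⟩⟩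
  · have hβc : β * c ^ (L - 1) = c * n / D := by
      rw [Real.rpow_sub_one hc.ne', show β * (c ^ L / c) = c * n * (c ^ L * q) / D by
        simp only [β]; field_simp, hcq, mul_one]
    rw [sum_smul_gradient_smul_eq hf hhom β hc, hβc]
    refine (hN.dualGap_le_flowAlignment _ θ t hθ hg hc k).trans
      (mul_le_mul_of_nonneg_right ?_ (sub_nonneg.mpr (hN.flowAlignment_le_one _ θ t)))
    rw [neg_div, Real.rpow_neg hγ.le, ← one_div, le_div_iff₀' (by positivity)]
    exact hsq
  · set 𝓛t := ExpLoss f x y (θ t)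
    set S := γ ^ ((2:ℝ) / L)
    have hℓ : 0 < -Real.log 𝓛t := neg_pos.mpr (Real.log_neg (expLoss_pos hm _) hloss)
    have hexp : Real.exp (-q) ≤ 𝓛t := hq_def ▸ exp_neg_iInf_le_expLoss hm (θ t)
    have hkey : L * -Real.log 𝓛t * 𝓛t ≤ D * n := mul_neg_log_expLoss_mul_le hN hL.le hf hhom (θ t)
    have hcore : β * Real.exp (-q) * (S * L * -Real.log 𝓛t) ≤ q :=
      calc β * Real.exp (-q) * (S * L * -Real.log 𝓛t)
          = S * (c * n) ^ 2 * q * (L * -Real.log 𝓛t * Real.exp (-q)) / (n * D) := by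
            simp only [β]; field_simp
        _ ≤ 1 * q * (L * -Real.log 𝓛t * 𝓛t) / (n * D) := by gcongr
        _ ≤ 1 * q * (D * n) / (n * D) := by gcongr
        _ = q := by field_simp
    refine (sum_mul_margin_sub_one_le hhom hc hq hcq (by positivity) (θ t)).trans ?_
    rw [one_div, Real.log_inv, div_eq_mul_one_div (m : ℝ)]
    refine mul_le_mul_of_nonneg_left ?_ (Nat.cast_nonneg m)
    rw [mul_div_assoc', div_le_div_iff₀ (by positivity) (by positivity)]
    nlinarith [Real.exp_pos 1]

end ApproxKKT

theorem stmt_16_general {p d m : ℕ} (hm : 0 < m)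
    (x : Fin m → E d) (y : Fin m → ℝ)
    (L : ℝ) (hL : 0 < L) (f : E p → E d → ℝ)
    (hf : ∀ x' : E d, ContDiff ℝ 1 fun θ => f θ x')
    (hhom : ∀ c : ℝ, 0 < c → ∀ (θ : E p) (x' : E d), f (c • θ) x' = c ^ L * f θ x')
    (N : E p → ℝ) (hN : IsNormOn N)
    (θ θ' : ℝ → E p) (hflow : IsSteepestFlow N (ExpLoss f x y) θ θ')
    (t0 : ℝ) (ht0 : 0 ≤ t0) (hsep : ExpLoss f x y (θ t0) < 1)
    (hθ0 : ∀ t, t0 ≤ t → θ t ≠ 0)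
    (hg0 : ∀ t, t0 ≤ t → gradient (ExpLoss f x y) (θ t) ≠ 0)
    (hNdiff : ∀ t ∈ Set.Ioi t0, DifferentiableAt ℝ (fun s => N (θ s)) t)
    (t : ℝ) (ht : t0 < t) (hq : 0 < ⨅ i, y i * f (θ t) (x i)) :
    ∀ q : ℝ, q = ⨅ i, y i * f (θ t) (x i) →
    ∀ θtilde : E p, θtilde = (q ^ (-(1 / L))) • θ t →
      ∃ lam : Fin m → ℝ, (∀ i, 0 ≤ lam i) ∧
        ∀ ktilde : E p,
          (∀ w : E p, (1/2) * (N w) ^ 2 ≥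
            (1/2) * (N θtilde) ^ 2 + (inner ℝ ktilde (w - θtilde) : ℝ)) →
          ((1/2) * (DualNorm N
              (∑ i, lam i • (y i • gradient (fun w => f w (x i)) θtilde))) ^ 2 -
            (1/2) * (DualNorm N ktilde) ^ 2 -
            (inner ℝ θtilde
              ((∑ i, lam i • (y i • gradient (fun w => f w (x i)) θtilde)) -
                ktilde) : ℝ) ≤
            SoftMargin N (ExpLoss f x y) L (θ t0) ^ (-(2:ℝ) / L) *
              (1 - FlowAlignment N (ExpLoss f x y) θ t)) ∧
          (∑ i, lam i * (y i * f θtilde (x i) - 1) ≤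
            (m : ℝ) / (Real.exp 1 *
              SoftMargin N (ExpLoss f x y) L (θ t0) ^ ((2:ℝ) / L) * L *
              Real.log (1 / ExpLoss f x y (θ t)))) := by
  rintro q hq_def _ rfl
  have hfd : ∀ x' : E d, Differentiable ℝ fun θ => f θ x' := fun x' =>
    (hf x').differentiable one_ne_zero
  have h𝓛 : Differentiable ℝ (ExpLoss f x y) := fun w =>
    (hasGradientAt_expLoss hfd w).differentiableAt
  have hloss : ExpLoss f x y (θ t) < 1 :=
    (hflow.antitoneOn_loss h𝓛 ht0 (ht0.trans ht.le) ht.le).trans_lt hsep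
  have hγ : 0 < SoftMargin N (ExpLoss f x y) L (θ t0) :=
    softMargin_pos hN (hθ0 t0 le_rfl) (expLoss_pos hm _) hsep
  have hγle : SoftMargin N (ExpLoss f x y) L (θ t0) ≤ HardMargin N f x y L (θ t) :=
    (hflow.softMargin_le hN h𝓛 (expLoss_pos hm) hL.le (mul_neg_log_expLoss_mul_le hN hL.le hfd hhom)
      ht0 hsep hθ0 hNdiff ht.le).trans (softMargin_le_hardMargin hN hm (θ t))
  obtain ⟨lam, hlam, hkkt⟩ := exists_approx_kkt_multipliers hN hm hL hfd hhom θ t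
    (hθ0 t ht.le) (hg0 t ht.le) hloss hq_def (hq_def ▸ hq) hγ hγle
  exact ⟨lam, hlam, fun k _ => hkkt k⟩

theorem stmt_16 {p d m : ℕ} (hp : 0 < p) (hd : 0 < d) (hm : 0 < m)
    (x : Fin m → E d) (y : Fin m → ℝ) (hy : ∀ i, y i = 1 ∨ y i = -1)
    (L : ℝ) (hL : 0 < L) (f : E p → E d → ℝ)
    (hf : ∀ x' : E d, ContDiff ℝ 1 fun θ => f θ x')
    (hhom : ∀ c : ℝ, 0 < c → ∀ (θ : E p) (x' : E d), f (c • θ) x' = c ^ L * f θ x')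
    (N : E p → ℝ) (hN : IsNormOn N)
    (θ θ' : ℝ → E p) (hflow : IsSteepestFlow N (ExpLoss f x y) θ θ')
    (t0 : ℝ) (ht0 : 0 ≤ t0) (hsep : ExpLoss f x y (θ t0) < 1)
    (hθ0 : ∀ t, t0 ≤ t → θ t ≠ 0)
    (hg0 : ∀ t, t0 ≤ t → gradient (ExpLoss f x y) (θ t) ≠ 0)
    (hNdiff : ∀ t ∈ Set.Ioi t0, DifferentiableAt ℝ (fun s => N (θ s)) t)
    (hγdiff : ∀ t ∈ Set.Ioi t0, DifferentiableAt ℝ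
      (fun s => Real.log (SoftMargin N (ExpLoss f x y) L (θ s))) t)
    (t : ℝ) (ht : t0 < t) (hq : 0 < ⨅ i, y i * f (θ t) (x i)) :
    ∀ q : ℝ, q = ⨅ i, y i * f (θ t) (x i) →
    ∀ θtilde : E p, θtilde = (q ^ (-(1 / L))) • θ t →
      ∃ lam : Fin m → ℝ, (∀ i, 0 ≤ lam i) ∧
        ∀ ktilde : E p,
          (∀ w : E p, (1/2) * (N w) ^ 2 ≥
            (1/2) * (N θtilde) ^ 2 + (inner ℝ ktilde (w - θtilde) : ℝ)) →
          ((1/2) * (DualNorm N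
              (∑ i, lam i • (y i • gradient (fun w => f w (x i)) θtilde))) ^ 2 -
            (1/2) * (DualNorm N ktilde) ^ 2 -
            (inner ℝ θtilde
              ((∑ i, lam i • (y i • gradient (fun w => f w (x i)) θtilde)) -
                ktilde) : ℝ) ≤
            SoftMargin N (ExpLoss f x y) L (θ t0) ^ (-(2:ℝ) / L) *
              (1 - FlowAlignment N (ExpLoss f x y) θ t)) ∧
          (∑ i, lam i * (y i * f θtilde (x i) - 1) ≤
            (m : ℝ) / (Real.exp 1 *
              SoftMargin N (ExpLoss f x y) L (θ t0) ^ ((2:ℝ) / L) * L *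
              Real.log (1 / ExpLoss f x y (θ t)))) :=
  stmt_16_general hm x y L hL f hf hhom N hN θ θ' hflow t0 ht0 hsep hθ0 hg0 hNdiff t ht hq
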